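/- Let V be a finite set of n nodes and P = (p_1, …, p_m), m > 1, arbitrary monitoring paths where p_i ⊆ V has cardinality d_i. Set N_max = min{Σ_{i=1}^{m} d_i, m·2^{m−1}} (note Σ d_i = m·d̄ where d̄ is the average path length) and i_max = max{k ∈ ℕ : Σ_{i=1}^{k} i·C(m,i) ≤ N_max}. Then the number of identifiable nodes is at most min{Σ_{i=1}^{i_max} C(m,i) + ⌊(N_max − Σ_{i=1}^{i_max} i·C(m,i))/(i_max + 1)⌋, n}. -/

import Mathlib

/-!
Identifiable nodes have pairwise distinct nonempty encodings, so they inject into a family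
`𝒜` of distinct nonempty subsets of the `m` paths. By double counting, the sizes of these
subsets sum to at most `Σ dᵢ`, and, the subsets being distinct, to at most the total size
`m·2^(m-1)` of all subsets.

For any `k`, only members of size `i ≤ k` have a positive deficit `k + 1 - i`, and there
are at most `C(m, i)` of them, so `(k + 1)|𝒜| ≤ N + Σ_{1 ≤ i ≤ k} (k + 1 - i) C(m, i)`, which
rearranges to the bound; `k = i_max` is just one choice.
-/

/-- The encoding of a node `v` w.r.t. monitoring paths `p`. -/
def encoding {V : Type*} [DecidableEq V] {m : ℕ} (p : Fin m → Finset V) (v : V) :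
    Finset (Fin m) :=
  Finset.univ.filter fun i => v ∈ p i

/-- A node is identifiable iff its encoding is nonempty and distinct from the
encoding of every other node. -/
def Identifiable {V : Type*} [DecidableEq V] {m : ℕ} (p : Fin m → Finset V) (v : V) :
    Prop :=
  encoding p v ≠ ∅ ∧ ∀ w : V, w ≠ v → encoding p w ≠ encoding p v

/-- `i_max = max {k : Σ_{i=1}^k i·C(m,i) ≤ N}` (the partial sums are constant beyond
`k = m` since `C(m,i) = 0` for `i > m`, so the maximum is realized within `{0,…,m}`). -/
def imax (m N : ℕ) : ℕ :=
  Nat.findGreatest (fun k => ∑ i ∈ Finset.Icc 1 k, i * m.choose i ≤ N) m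

/-- `Σ_{i=1}^{i_max} C(m,i) + ⌊(N − Σ_{i=1}^{i_max} i·C(m,i)) / (i_max + 1)⌋`. -/
def boundFormula (m N : ℕ) : ℕ :=
  (∑ i ∈ Finset.Icc 1 (imax m N), m.choose i) +
    (N - ∑ i ∈ Finset.Icc 1 (imax m N), i * m.choose i) / (imax m N + 1)

open Finset

theorem Nat.le_add_div_of_mul_add_le {t a b N k : ℕ} (h : (k + 1) * t + b ≤ N + (k + 1) * a) :
    t ≤ a + (N - b) / (k + 1) := by
  rcases le_or_gt t a with hta | hat
  · exact Nat.le_add_right_of_le hta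
  obtain ⟨u, rfl⟩ := Nat.exists_eq_add_of_le hat.le
  rw [mul_add] at h
  exact Nat.add_le_add_left ((Nat.le_div_iff_mul_le k.add_one_pos).2 (by rw [mul_comm]; omega)) a

namespace Finset

variable {α : Type*} [Fintype α]

theorem sum_card_univ_finset :
    ∑ s : Finset α, #s = Fintype.card α * 2 ^ (Fintype.card α - 1) := by
  rw [← powerset_univ, sum_powerset_apply_card (fun i => i), card_univ,
    ← Nat.sum_range_mul_choose]
  simp only [smul_eq_mul, mul_comm]

theorem sum_tsub_card_le_of_empty_notMem {𝒜 : Finset (Finset α)} (h𝒜 : ∅ ∉ 𝒜) (k : ℕ) :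
    ∑ s ∈ 𝒜, (k + 1 - #s) ≤ ∑ i ∈ Icc 1 k, (k + 1 - i) * (Fintype.card α).choose i := by
  have hmaps : ∀ s ∈ {s ∈ 𝒜 | #s ≤ k}, #s ∈ Icc 1 k := fun s hs => by
    obtain ⟨hs𝒜, hsk⟩ := mem_filter.1 hs
    exact mem_Icc.2 ⟨card_pos.2 (nonempty_iff_ne_empty.2 (ne_of_mem_of_not_mem hs𝒜 h𝒜)), hsk⟩
  rw [← sum_filter_of_ne (p := fun s => #s ≤ k) (fun s _ h => by omega),
    ← sum_fiberwise_of_maps_to hmaps]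
  refine sum_le_sum fun i _ => ?_
  rw [sum_congr rfl fun s hs => by rw [(mem_filter.1 hs).2], sum_const, smul_eq_mul, mul_comm]
  exact Nat.mul_le_mul_left _ (sized_slice (𝒜 := {s ∈ 𝒜 | #s ≤ k})).card_le

theorem mul_card_add_sum_mul_choose_le {𝒜 : Finset (Finset α)} (h𝒜 : ∅ ∉ 𝒜) (k : ℕ) :
    (k + 1) * #𝒜 + ∑ i ∈ Icc 1 k, i * (Fintype.card α).choose i ≤
      ∑ s ∈ 𝒜, #s + (k + 1) * ∑ i ∈ Icc 1 k, (Fintype.card α).choose i := by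
  have hsplit : ∑ i ∈ Icc 1 k, (k + 1 - i) * (Fintype.card α).choose i +
      ∑ i ∈ Icc 1 k, i * (Fintype.card α).choose i =
        (k + 1) * ∑ i ∈ Icc 1 k, (Fintype.card α).choose i := by
    rw [← sum_add_distrib, mul_sum]
    refine sum_congr rfl fun i hi => ?_
    rw [← add_mul, Nat.sub_add_cancel (by grind)]
  calc (k + 1) * #𝒜 + ∑ i ∈ Icc 1 k, i * (Fintype.card α).choose i
      ≤ ∑ s ∈ 𝒜, (#s + (k + 1 - #s)) + ∑ i ∈ Icc 1 k, i * (Fintype.card α).choose i := by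
        rw [mul_comm, ← smul_eq_mul, ← sum_const]
        exact Nat.add_le_add_right (sum_le_sum fun s _ => by omega) _
    _ ≤ ∑ s ∈ 𝒜, #s + ∑ i ∈ Icc 1 k, (k + 1 - i) * (Fintype.card α).choose i +
        ∑ i ∈ Icc 1 k, i * (Fintype.card α).choose i := by
        rw [sum_add_distrib]
        gcongr
        exact sum_tsub_card_le_of_empty_notMem h𝒜 k
    _ = _ := by rw [add_assoc, hsplit]

theorem card_le_of_sum_card_le {𝒜 : Finset (Finset α)} (h𝒜 : ∅ ∉ 𝒜) {N : ℕ}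
    (hN : ∑ s ∈ 𝒜, #s ≤ N) (k : ℕ) :
    #𝒜 ≤ ∑ i ∈ Icc 1 k, (Fintype.card α).choose i +
      (N - ∑ i ∈ Icc 1 k, i * (Fintype.card α).choose i) / (k + 1) :=
  Nat.le_add_div_of_mul_add_le
    ((mul_card_add_sum_mul_choose_le h𝒜 k).trans (Nat.add_le_add_right hN _))

end Finset

theorem card_le_boundFormula {m N : ℕ} {𝒜 : Finset (Finset (Fin m))} (h𝒜 : ∅ ∉ 𝒜)
    (hN : ∑ s ∈ 𝒜, #s ≤ N) : #𝒜 ≤ boundFormula m N := by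
  have h := card_le_of_sum_card_le h𝒜 hN (imax m N)
  rwa [Fintype.card_fin] at h

section Encoding

variable {V : Type*} [DecidableEq V] {m : ℕ} (p : Fin m → Finset V)

theorem sum_card_encoding [Fintype V] : ∑ v, #(encoding p v) = ∑ i, #(p i) := by
  simp only [encoding, card_filter]
  rw [sum_comm]
  simp

theorem injOn_encoding : Set.InjOn (encoding p) {v | Identifiable p v} :=
  fun v _ _ hw h => by_contra fun hne => hw.2 v hne h

end Encoding

theorem identifiable_le_arbitrary_routing_general {V : Type*} [Fintype V] [DecidableEq V]
    {m : ℕ} (p : Fin m → Finset V) :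
    {v : V | Identifiable p v}.ncard ≤
      min (boundFormula m (min (∑ i, (p i).card) (m * 2 ^ (m - 1))))
        (Fintype.card V) := by
  classical
  set S := {v | Identifiable p v}.toFinset
  have hinj : Set.InjOn (encoding p) S := by simpa [S] using injOn_encoding p
  have hempty : ∅ ∉ S.image (encoding p) := by simp +contextual [S, Identifiable]
  have hsum : ∑ s ∈ S.image (encoding p), #s ≤ min (∑ i, #(p i)) (m * 2 ^ (m - 1)) := by
    refine le_min ?_ ?_
    · rw [sum_image hinj, ← sum_card_encoding p]
      exact sum_le_sum_of_subset (subset_univ S)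
    · simpa only [sum_card_univ_finset, Fintype.card_fin] using
        sum_le_sum_of_subset (f := card) (subset_univ (S.image (encoding p)))
  rw [Set.ncard_eq_toFinset_card', ← card_image_of_injOn hinj]
  exact le_min (card_le_boundFormula hempty hsum) (card_image_le.trans (card_le_univ S))

/-- Identifiability under arbitrary routing (Theorem IV.1): with `m > 1` arbitrary
monitoring paths on `n` nodes, setting `N_max = min (Σ_i d_i) (m·2^(m-1))`
(where `Σ_i d_i = m·d̄`), the number of identifiable nodes is at most
`min (boundFormula m N_max) n`. -/
theorem identifiable_le_arbitrary_routing {V : Type*} [Fintype V] [DecidableEq V]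
    {m : ℕ} (hm : 1 < m) (p : Fin m → Finset V) :
    {v : V | Identifiable p v}.ncard ≤
      min (boundFormula m (min (∑ i, (p i).card) (m * 2 ^ (m - 1))))
        (Fintype.card V) :=
  identifiable_le_arbitrary_routing_general p
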